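/- arXiv:math/0608400 — 3 statements merged into one kernel-verified Lean document; each statement's English description precedes it below -/
import Mathlib

section
/- Let n be a nonnegative integer, ρ ∈ (0,1) and λ ∈ [0,1]. For p ∈ [0,1] let ν^p(z) = C(n,z) p^z (1−p)^{n−z} for z = 0,1,…,n denote the Binomial(n,p) probability mass function (where C(n,z) is the binomial coefficient). Then Σ_{z=0}^{n} [ν^λ(z)]² / ν^ρ(z) = ( 1 + (ρ−λ)² / (ρ(1−ρ)) )^{n}. -/
/-- Chi-square type identity between binomial distributions (Lemma 4.2). -/
theorem stmt3 (n : ℕ) (ρ lam : ℝ) (hρ0 : 0 < ρ) (hρ1 : ρ < 1)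
    (hl0 : 0 ≤ lam) (hl1 : lam ≤ 1) :
    ∑ z ∈ Finset.range (n + 1),
        ((n.choose z : ℝ) * lam ^ z * (1 - lam) ^ (n - z)) ^ 2 /
          ((n.choose z : ℝ) * ρ ^ z * (1 - ρ) ^ (n - z)) =
      (1 + (ρ - lam) ^ 2 / (ρ * (1 - ρ))) ^ n := by
  have hρ' : (0:ℝ) < 1 - ρ := by linarith
  have hsum : (1 + (ρ - lam) ^ 2 / (ρ * (1 - ρ))) =
      lam ^ 2 / ρ + (1 - lam) ^ 2 / (1 - ρ) := by
    field_simp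
    ring
  rw [hsum, add_pow]
  apply Finset.sum_congr rfl
  intro z hz
  have hz' : z ≤ n := Nat.lt_succ_iff.mp (Finset.mem_range.mp hz)
  have hc : (0:ℝ) < (n.choose z : ℝ) := by
    exact_mod_cast Nat.choose_pos hz'
  rw [div_pow, div_pow]
  field_simp
  rw [← pow_mul lam 2 z, ← pow_mul (1 - lam) 2 (n - z)]
  ring
end

section
/- Let n be a nonnegative integer, ρ ∈ (0,1) and λ ∈ [0,1]. For p ∈ [0,1] let ν^p(z) = C(n,z) p^z (1−p)^{n−z} for z = 0,1,…,n denote the Binomial(n,p) probability mass function. Then for every function f : {0,1,…,n} → [0,1]: Σ_{z=0}^{n} f(z) ν^λ(z) ≤ ( Σ_{z=0}^{n} f(z) ν^ρ(z) )^{1/2} · exp( n(ρ−λ)² / (2ρ(1−ρ)) ). -/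
/-- Lemma 4.2: change of measure between binomial distributions. -/
theorem stmt5 (n : ℕ) (ρ lam : ℝ) (hρ0 : 0 < ρ) (hρ1 : ρ < 1)
    (hl0 : 0 ≤ lam) (hl1 : lam ≤ 1)
    (f : ℕ → ℝ) (hf0 : ∀ z, 0 ≤ f z) (hf1 : ∀ z, f z ≤ 1) :
    ∑ z ∈ Finset.range (n + 1),
        f z * ((n.choose z : ℝ) * lam ^ z * (1 - lam) ^ (n - z)) ≤
      (∑ z ∈ Finset.range (n + 1),
          f z * ((n.choose z : ℝ) * ρ ^ z * (1 - ρ) ^ (n - z))) ^ (1 / 2 : ℝ) *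
        Real.exp ((n : ℝ) * (ρ - lam) ^ 2 / (2 * ρ * (1 - ρ))) := by
  have hρ1' : 0 < 1 - ρ := by linarith
  have hl1' : 0 ≤ 1 - lam := by linarith
  set νl : ℕ → ℝ := fun z => (n.choose z : ℝ) * lam ^ z * (1 - lam) ^ (n - z) with hνl
  set νr : ℕ → ℝ := fun z => (n.choose z : ℝ) * ρ ^ z * (1 - ρ) ^ (n - z) with hνr
  have hνrpos : ∀ z ∈ Finset.range (n + 1), 0 < νr z := by
    intro z hz
    simp only [Finset.mem_range] at hz
    have : 0 < (n.choose z : ℝ) := by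
      exact_mod_cast Nat.choose_pos (Nat.lt_succ_iff.mp hz)
    positivity
  have hνlnn : ∀ z, 0 ≤ νl z := fun z => by positivity
  set c : ℝ := (ρ - lam) ^ 2 / (ρ * (1 - ρ)) with hc
  have hc0 : 0 ≤ c := by positivity
  set S : ℝ := ∑ z ∈ Finset.range (n + 1), f z * νr z with hS
  have hS0 : 0 ≤ S :=
    Finset.sum_nonneg fun z hz => mul_nonneg (hf0 z) (hνrpos z hz).le
  -- Step 1: Cauchy-Schwarz
  set u : ℕ → ℝ := fun z => Real.sqrt (f z * νr z) with hu
  set v : ℕ → ℝ := fun z => Real.sqrt (f z * (νl z) ^ 2 / νr z) with hv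
  have huv : ∀ z ∈ Finset.range (n + 1), f z * νl z = u z * v z := by
    intro z hz
    have hr := hνrpos z hz
    rw [hu, hv, ← Real.sqrt_mul (mul_nonneg (hf0 z) hr.le)]
    have : f z * νr z * (f z * νl z ^ 2 / νr z) = (f z * νl z) ^ 2 := by
      field_simp
    rw [this, Real.sqrt_sq (mul_nonneg (hf0 z) (hνlnn z))]
  have hCS : (∑ z ∈ Finset.range (n + 1), f z * νl z) ^ 2 ≤
      S * ∑ z ∈ Finset.range (n + 1), (νl z) ^ 2 / νr z := by
    calc (∑ z ∈ Finset.range (n + 1), f z * νl z) ^ 2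
        = (∑ z ∈ Finset.range (n + 1), u z * v z) ^ 2 := by
          rw [Finset.sum_congr rfl huv]
      _ ≤ (∑ z ∈ Finset.range (n + 1), u z ^ 2) *
          ∑ z ∈ Finset.range (n + 1), v z ^ 2 :=
          Finset.sum_mul_sq_le_sq_mul_sq _ _ _
      _ ≤ S * ∑ z ∈ Finset.range (n + 1), (νl z) ^ 2 / νr z := by
          apply mul_le_mul
          · apply le_of_eq
            apply Finset.sum_congr rfl
            intro z hz
            exact Real.sq_sqrt (mul_nonneg (hf0 z) (hνrpos z hz).le)
          · apply Finset.sum_le_sum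
            intro z hz
            have hr := hνrpos z hz
            rw [Real.sq_sqrt (div_nonneg (mul_nonneg (hf0 z) (sq_nonneg _)) hr.le)]
            apply div_le_div_of_nonneg_right ?_ hr.le
            nlinarith [hf1 z, hf0 z, sq_nonneg (νl z)]
          · exact Finset.sum_nonneg fun z hz => sq_nonneg _
          · exact hS0
  -- Step 2: compute the chi-square-type sum
  have hT : ∑ z ∈ Finset.range (n + 1), (νl z) ^ 2 / νr z
      = (lam ^ 2 / ρ + (1 - lam) ^ 2 / (1 - ρ)) ^ n := by
    rw [add_pow]
    apply Finset.sum_congr rfl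
    intro z hz
    simp only [Finset.mem_range, Nat.lt_succ_iff] at hz
    have hC : 0 < (n.choose z : ℝ) := by exact_mod_cast Nat.choose_pos hz
    rw [hνl, hνr]
    rw [div_pow, div_pow, div_mul_div_comm, ← pow_mul, ← pow_mul]
    field_simp
    ring
  -- Step 3: the base equals 1 + c
  have hbase : lam ^ 2 / ρ + (1 - lam) ^ 2 / (1 - ρ) = 1 + c := by
    rw [hc]
    field_simp
    ring
  -- Step 4: (1+c)^n ≤ exp (n*c)
  have hpow : (1 + c) ^ n ≤ Real.exp ((n : ℝ) * c) := by
    calc (1 + c) ^ n ≤ Real.exp c ^ n := by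
          apply pow_le_pow_left₀ (by linarith)
          linarith [Real.add_one_le_exp c]
      _ = Real.exp ((n : ℝ) * c) := by
          rw [← Real.exp_nat_mul]
  -- Combine
  have hL0 : 0 ≤ ∑ z ∈ Finset.range (n + 1), f z * νl z :=
    Finset.sum_nonneg fun z _ => mul_nonneg (hf0 z) (hνlnn z)
  have hfin : (∑ z ∈ Finset.range (n + 1), f z * νl z) ^ 2 ≤
      S * Real.exp ((n : ℝ) * c) := by
    calc (∑ z ∈ Finset.range (n + 1), f z * νl z) ^ 2
        ≤ S * ∑ z ∈ Finset.range (n + 1), (νl z) ^ 2 / νr z := hCS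
      _ = S * (1 + c) ^ n := by rw [hT, hbase]
      _ ≤ S * Real.exp ((n : ℝ) * c) := by
          exact mul_le_mul_of_nonneg_left hpow hS0
  have hsqrt : ∑ z ∈ Finset.range (n + 1), f z * νl z ≤
      Real.sqrt (S * Real.exp ((n : ℝ) * c)) := by
    rw [← Real.sqrt_sq hL0]
    exact Real.sqrt_le_sqrt hfin
  calc ∑ z ∈ Finset.range (n + 1), f z * νl z
      ≤ Real.sqrt (S * Real.exp ((n : ℝ) * c)) := hsqrt
    _ = S ^ (1 / 2 : ℝ) * Real.exp ((n : ℝ) * (ρ - lam) ^ 2 / (2 * ρ * (1 - ρ))) := by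
        have harg : (n : ℝ) * c * (1 / 2) = (n : ℝ) * (ρ - lam) ^ 2 / (2 * ρ * (1 - ρ)) := by
          rw [hc]
          field_simp [hρ0.ne', hρ1'.ne']
        rw [Real.sqrt_mul hS0, Real.sqrt_eq_rpow S, Real.sqrt_eq_rpow,
          ← Real.exp_mul, harg]
end

section
/- For all constants C₁, C₂, C₃, C₄, C₅ ∈ (0,∞) and every real m with 1 ≤ m < 3, there exist t₀, C ∈ (0,∞), depending only on C₁,…,C₅ and m, with the following property. Let t ≥ t₀ and let X be a real random variable on a probability space with Ψ := E|X| < ∞, satisfying for every real u ≥ 1 the tail bound P(|X| ≥ u) ≤ C₁ (t²/u⁴) Ψ + C₂ (t²/u³) + C₃ (t³/u⁵) + C₄ exp(−C₅ u³/t²) + e^{−u/2}. Then E(|X|^m) ≤ C t^{2m/3}; in particular (taking m = 1) Ψ ≤ C t^{2/3}. -/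
open MeasureTheory

set_option maxHeartbeats 1000000


lemma two_pow_rpow (k : ℕ) (p : ℝ) : ((2:ℝ)^k)^p = ((2:ℝ)^p)^k := by
  rw [← Real.rpow_natCast (2:ℝ) k, ← Real.rpow_natCast ((2:ℝ)^p) k,
      ← Real.rpow_mul (by norm_num), ← Real.rpow_mul (by norm_num), mul_comm]

lemma geom_sum_le (b q : ℝ) (hb : 0 ≤ b) (hq0 : 0 ≤ q) (hq : q < 1) :
    ∑' k : ℕ, ENNReal.ofReal (b * q ^ k) ≤ ENNReal.ofReal (b * (1 - q)⁻¹) := by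
  refine le_of_eq ?_
  have h1 : ∀ k : ℕ, ENNReal.ofReal (b * q ^ k) = ENNReal.ofReal b * (ENNReal.ofReal q) ^ k := by
    intro k
    rw [ENNReal.ofReal_mul hb, ENNReal.ofReal_pow hq0]
  calc ∑' k : ℕ, ENNReal.ofReal (b * q ^ k)
      = ENNReal.ofReal b * ∑' k : ℕ, (ENNReal.ofReal q) ^ k := by
        simp_rw [h1]; rw [ENNReal.tsum_mul_left]
    _ = ENNReal.ofReal b * (1 - ENNReal.ofReal q)⁻¹ := by rw [ENNReal.tsum_geometric]
    _ = ENNReal.ofReal (b * (1 - q)⁻¹) := by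
        rw [← ENNReal.ofReal_one, ← ENNReal.ofReal_sub _ hq0,
          ← ENNReal.ofReal_inv_of_pos (by linarith), ← ENNReal.ofReal_mul hb]

lemma lemA (Ω : Type) [MeasurableSpace Ω] (P : Measure Ω) [IsProbabilityMeasure P]
    (X : Ω → ℝ) (hX : Measurable X) (p A : ℝ) (hp : 0 ≤ p) (hA : 1 ≤ A) :
    ∫⁻ ω, ENNReal.ofReal (|X ω| ^ p) ∂P ≤
      ENNReal.ofReal (A ^ p) +
        ∑' k : ℕ, ENNReal.ofReal (((2:ℝ)^(k+1) * A) ^ p) * P {ω | (2:ℝ)^k * A ≤ |X ω|} := by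
  have hA0 : (0:ℝ) < A := lt_of_lt_of_le one_pos hA
  have hmeas : ∀ k : ℕ, MeasurableSet {ω | (2:ℝ)^k * A ≤ |X ω|} :=
    fun k => measurableSet_le measurable_const hX.abs
  have hpt : ∀ ω, ENNReal.ofReal (|X ω| ^ p) ≤
      ENNReal.ofReal (A ^ p) + ∑' k : ℕ,
        Set.indicator {ω | (2:ℝ)^k * A ≤ |X ω|}
          (fun _ => ENNReal.ofReal (((2:ℝ)^(k+1)*A)^p)) ω := by
    intro ω
    rcases le_or_gt (|X ω|) A with h | h
    · exact le_add_of_le_of_nonneg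
        (ENNReal.ofReal_le_ofReal (Real.rpow_le_rpow (abs_nonneg _) h hp)) (by positivity)
    · have hex : ∃ n : ℕ, |X ω| < 2^n * A := by
        obtain ⟨n, hn⟩ := pow_unbounded_of_one_lt (|X ω|) (one_lt_two (α := ℝ))
        exact ⟨n, hn.trans_le (le_mul_of_one_le_right (by positivity) hA)⟩
      classical
      set n₀ := Nat.find hex with hn₀
      have hn₀ne : n₀ ≠ 0 := by
        intro h0
        have := Nat.find_spec hex
        rw [← hn₀, h0] at this
        simp at this
        linarith
      obtain ⟨k, hk⟩ : ∃ k, n₀ = k + 1 := ⟨n₀ - 1, (Nat.succ_pred_eq_of_pos (Nat.pos_of_ne_zero hn₀ne)).symm⟩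
      have hlt : |X ω| < 2^(k+1) * A := by
        have := Nat.find_spec hex; rwa [← hn₀, hk] at this
      have hge : (2:ℝ)^k * A ≤ |X ω| := by
        by_contra hcon
        push_neg at hcon
        exact absurd (Nat.find_le hcon) (by omega : ¬ n₀ ≤ k)
      calc ENNReal.ofReal (|X ω| ^ p)
          ≤ ENNReal.ofReal (((2:ℝ)^(k+1)*A)^p) :=
            ENNReal.ofReal_le_ofReal (Real.rpow_le_rpow (abs_nonneg _) hlt.le hp)
        _ = Set.indicator {ω | (2:ℝ)^k * A ≤ |X ω|}
              (fun _ => ENNReal.ofReal (((2:ℝ)^(k+1)*A)^p)) ω :=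
            (Set.indicator_of_mem (show ω ∈ {ω | (2:ℝ)^k * A ≤ |X ω|} from hge)
              (fun _ => ENNReal.ofReal (((2:ℝ)^(k+1)*A)^p))).symm
        _ ≤ ∑' j : ℕ, Set.indicator {ω | (2:ℝ)^j * A ≤ |X ω|}
              (fun _ => ENNReal.ofReal (((2:ℝ)^(j+1)*A)^p)) ω := ENNReal.le_tsum k
        _ ≤ _ := le_add_of_nonneg_left (by positivity)
  calc ∫⁻ ω, ENNReal.ofReal (|X ω| ^ p) ∂P
      ≤ ∫⁻ ω, (ENNReal.ofReal (A ^ p) + ∑' k : ℕ,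
          Set.indicator {ω | (2:ℝ)^k * A ≤ |X ω|}
            (fun _ => ENNReal.ofReal (((2:ℝ)^(k+1)*A)^p)) ω) ∂P := lintegral_mono hpt
    _ = ENNReal.ofReal (A ^ p) +
        ∑' k : ℕ, ENNReal.ofReal (((2:ℝ)^(k+1) * A) ^ p) * P {ω | (2:ℝ)^k * A ≤ |X ω|} := by
        rw [lintegral_add_left measurable_const, lintegral_const, measure_univ, mul_one,
          lintegral_tsum (fun k => (measurable_const.indicator (hmeas k)).aemeasurable)]
        congr 1
        exact tsum_congr fun k => lintegral_indicator_const (hmeas k) _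

lemma lemB (C₁ C₂ C₃ C₄ C₅ : ℝ) (h1 : 0 < C₁) (h2 : 0 < C₂) (h3 : 0 < C₃)
    (h4 : 0 < C₄) (h5 : 0 < C₅) (p r t : ℝ) (hp1 : 1 ≤ p) (hp3 : p < 3)
    (hr : 8 ≤ r) (hrC : 4 ≤ C₅ * r ^ 3) (ht : 1 ≤ t)
    (Ω : Type) [MeasurableSpace Ω] (P : Measure Ω) [IsProbabilityMeasure P]
    (X : Ω → ℝ) (hX : Measurable X)
    (htail : ∀ u : ℝ, 1 ≤ u →
      (P {ω | u ≤ |X ω|}).toReal ≤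
        C₁ * (t ^ 2 / u ^ 4) * (∫ ω, |X ω| ∂P) + C₂ * (t ^ 2 / u ^ 3) +
          C₃ * (t ^ 3 / u ^ 5) + C₄ * Real.exp (-C₅ * u ^ 3 / t ^ 2) +
          Real.exp (-u / 2)) :
    ∫⁻ ω, ENNReal.ofReal (|X ω| ^ p) ∂P ≤
      ENNReal.ofReal ((r * t ^ ((2:ℝ)/3)) ^ p *
        (1 + 16 * C₁ * (t ^ 2 / (r * t ^ ((2:ℝ)/3)) ^ 4) * (∫ ω, |X ω| ∂P)
          + 8 * (1 - (2:ℝ) ^ p / 8)⁻¹ * C₂ + 16 * C₃ + 16 * C₄ + 16)) := by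
  have ht0 : (0:ℝ) < t := lt_of_lt_of_le one_pos ht
  set Ψ := ∫ ω, |X ω| ∂P with hΨdef
  set A := r * t ^ ((2:ℝ)/3) with hAdef
  have hΨ0 : 0 ≤ Ψ := integral_nonneg fun _ => abs_nonneg _
  have hτ1 : (1:ℝ) ≤ t ^ ((2:ℝ)/3) := by
    calc (1:ℝ) = (1:ℝ) ^ ((2:ℝ)/3) := (Real.one_rpow _).symm
    _ ≤ t ^ ((2:ℝ)/3) := Real.rpow_le_rpow (by norm_num) ht (by norm_num)
  have hA8 : 8 ≤ A := by
    calc (8:ℝ) ≤ r := hr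
    _ = r * 1 := (mul_one r).symm
    _ ≤ A := mul_le_mul_of_nonneg_left hτ1 (by linarith)
  have hA1 : (1:ℝ) ≤ A := by linarith
  have hA0 : (0:ℝ) < A := by linarith
  have hτ3 : (t ^ ((2:ℝ)/3)) ^ (3:ℕ) = t ^ (2:ℕ) := by
    rw [← Real.rpow_natCast (t ^ ((2:ℝ)/3)) 3, ← Real.rpow_mul ht0.le,
      ← Real.rpow_natCast t 2]
    norm_num
  have hA3 : A ^ 3 = r ^ 3 * t ^ 2 := by rw [hAdef, mul_pow, hτ3]
  have hr1 : (1:ℝ) ≤ r := by linarith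
  have hr3 : (1:ℝ) ≤ r ^ 3 := one_le_pow₀ hr1
  have htA3 : t ^ 2 / A ^ 3 ≤ 1 := by
    rw [hA3, div_le_one (by positivity)]
    nlinarith [sq_nonneg t]
  have ht3A5 : t ^ 3 / A ^ 5 ≤ 1 := by
    rw [div_le_one (by positivity)]
    have hτ5 : (t ^ ((2:ℝ)/3)) ^ (5:ℕ) = t ^ ((10:ℝ)/3) := by
      rw [← Real.rpow_natCast (t ^ ((2:ℝ)/3)) 5, ← Real.rpow_mul ht0.le]
      norm_num
    have ht3 : (t:ℝ) ^ (3:ℕ) ≤ t ^ ((10:ℝ)/3) := by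
      rw [← Real.rpow_natCast t 3]
      exact Real.rpow_le_rpow_of_exponent_le ht (by norm_num)
    have hr5 : (1:ℝ) ≤ r ^ 5 := one_le_pow₀ hr1
    calc (t:ℝ) ^ 3 ≤ t ^ ((10:ℝ)/3) := ht3
    _ = 1 * (t ^ ((2:ℝ)/3)) ^ (5:ℕ) := by rw [hτ5, one_mul]
    _ ≤ r ^ 5 * (t ^ ((2:ℝ)/3)) ^ (5:ℕ) := by
        have : (0:ℝ) ≤ (t ^ ((2:ℝ)/3)) ^ (5:ℕ) := by positivity
        nlinarith
    _ = A ^ 5 := by rw [hAdef, mul_pow]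
  have h2p0 : (0:ℝ) < (2:ℝ) ^ p := Real.rpow_pos_of_pos two_pos p
  have h2ps : (2:ℝ) ^ p < 8 := by
    have h := Real.rpow_lt_rpow_of_exponent_lt (x := 2) one_lt_two hp3
    rwa [show ((3:ℝ)) = ((3:ℕ):ℝ) by norm_num, Real.rpow_natCast, show ((2:ℝ)^(3:ℕ)) = 8 by norm_num] at h
  have h2p : (2:ℝ) ^ p ≤ 8 := h2ps.le
  have hinv8 : (0:ℝ) ≤ (1 - (2:ℝ)^p/8)⁻¹ := inv_nonneg.2 (by linarith)
  have hApnn : (0:ℝ) ≤ A ^ p := Real.rpow_nonneg hA0.le p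
  have hq_inv2 : ∀ q : ℝ, q ≤ 1/2 → (1 - q)⁻¹ ≤ 2 := by
    intro q hh
    have h12 : (1:ℝ)/2 ≤ 1 - q := by linarith
    have := one_div_le_one_div_of_le (by norm_num : (0:ℝ) < 1/2) h12
    rw [one_div] at this
    linarith [this]
  have hexp4 : Real.exp (-4:ℝ) ≤ 1/16 := by
    have h2e : (2:ℝ) ≤ Real.exp 1 := by have := Real.add_one_le_exp (1:ℝ); linarith
    have h16 : (16:ℝ) ≤ Real.exp 4 := by
      calc (16:ℝ) = 2 ^ (4:ℕ) := by norm_num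
      _ ≤ (Real.exp 1) ^ (4:ℕ) := pow_le_pow_left₀ (by norm_num) h2e 4
      _ = Real.exp 4 := by rw [← Real.exp_nat_mul]; norm_num
    rw [Real.exp_neg]
    have := inv_anti₀ (by norm_num : (0:ℝ) < 16) h16
    linarith [this]
  have key1 : ∀ k : ℕ, ((2:ℝ)^(k+1) * A) ^ p = ((2:ℝ)^p * ((2:ℝ)^p)^k) * A ^ p := by
    intro k
    rw [Real.mul_rpow (by positivity) hA0.le, pow_succ,
      Real.mul_rpow (by positivity) (by norm_num), two_pow_rpow]
    ring
  have hFnn : ∀ k : ℕ, (0:ℝ) ≤ ((2:ℝ)^(k+1) * A) ^ p :=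
    fun k => Real.rpow_nonneg (by positivity) p
  have hmain : ∀ B q : ℝ, 0 ≤ B → 0 ≤ q → q ≤ 1/2 → ((2:ℝ)^p * B) * (1-q)⁻¹ ≤ 16 * B := by
    intro B q hB hq0 hq
    have hinv : (1-q)⁻¹ ≤ 2 := hq_inv2 q hq
    have hinv0 : (0:ℝ) ≤ (1-q)⁻¹ := inv_nonneg.2 (by linarith)
    calc (2:ℝ)^p * B * (1-q)⁻¹ ≤ 8 * B * (1-q)⁻¹ :=
          mul_le_mul_of_nonneg_right (mul_le_mul_of_nonneg_right h2p hB) hinv0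
    _ ≤ 8 * B * 2 := mul_le_mul_of_nonneg_left hinv (by positivity)
    _ = 16 * B := by ring
  have hbern : ∀ k : ℕ, ((k:ℝ) + 1) ≤ 2 ^ k := by
    intro k
    have := one_add_mul_le_pow (a := (1:ℝ)) (by norm_num) k
    norm_num at this
    linarith
  have hbern8 : ∀ k : ℕ, ((k:ℝ) + 1) ≤ 8 ^ k := by
    intro k
    have := one_add_mul_le_pow (a := (7:ℝ)) (by norm_num) k
    norm_num at this
    have hk : (0:ℝ) ≤ (k:ℝ) := Nat.cast_nonneg k
    nlinarith
  -- the five series bounds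
  have hS1 : ∑' k : ℕ, ENNReal.ofReal (((2:ℝ)^(k+1) * A) ^ p) *
      ENNReal.ofReal (C₁ * (t ^ 2 / ((2:ℝ)^k * A) ^ 4) * Ψ) ≤
      ENNReal.ofReal (16 * C₁ * (t ^ 2 / A ^ 4) * Ψ * A ^ p) := by
    calc ∑' k : ℕ, ENNReal.ofReal (((2:ℝ)^(k+1) * A) ^ p) *
          ENNReal.ofReal (C₁ * (t ^ 2 / ((2:ℝ)^k * A) ^ 4) * Ψ)
        = ∑' k : ℕ, ENNReal.ofReal
            (((2:ℝ)^p * A^p * C₁ * (t^2/A^4) * Ψ) * ((2:ℝ)^p/16)^k) := by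
          refine tsum_congr fun k => ?_
          rw [← ENNReal.ofReal_mul (hFnn k)]
          congr 1
          rw [key1 k, mul_pow, show ((2:ℝ)^k)^(4:ℕ) = (16:ℝ)^k by
            rw [pow_right_comm]; norm_num, div_pow]
          field_simp
      _ ≤ ENNReal.ofReal (((2:ℝ)^p * A^p * C₁ * (t^2/A^4) * Ψ) * (1 - (2:ℝ)^p/16)⁻¹) :=
          geom_sum_le _ _ (by positivity) (by positivity) (by linarith)
      _ ≤ _ := by
          refine ENNReal.ofReal_le_ofReal ?_
          have h := hmain (A^p * C₁ * (t^2/A^4) * Ψ) ((2:ℝ)^p/16)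
            (by positivity) (by positivity) (by linarith)
          calc ((2:ℝ)^p * A^p * C₁ * (t^2/A^4) * Ψ) * (1 - (2:ℝ)^p/16)⁻¹
              = ((2:ℝ)^p * (A^p * C₁ * (t^2/A^4) * Ψ)) * (1 - (2:ℝ)^p/16)⁻¹ := by ring
            _ ≤ 16 * (A^p * C₁ * (t^2/A^4) * Ψ) := h
            _ = 16 * C₁ * (t ^ 2 / A ^ 4) * Ψ * A ^ p := by ring
  have hS2 : ∑' k : ℕ, ENNReal.ofReal (((2:ℝ)^(k+1) * A) ^ p) *
      ENNReal.ofReal (C₂ * (t ^ 2 / ((2:ℝ)^k * A) ^ 3)) ≤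
      ENNReal.ofReal (8 * (1 - (2:ℝ)^p/8)⁻¹ * C₂ * A ^ p) := by
    calc ∑' k : ℕ, ENNReal.ofReal (((2:ℝ)^(k+1) * A) ^ p) *
          ENNReal.ofReal (C₂ * (t ^ 2 / ((2:ℝ)^k * A) ^ 3))
        = ∑' k : ℕ, ENNReal.ofReal
            (((2:ℝ)^p * A^p * C₂ * (t^2/A^3)) * ((2:ℝ)^p/8)^k) := by
          refine tsum_congr fun k => ?_
          rw [← ENNReal.ofReal_mul (hFnn k)]
          congr 1
          rw [key1 k, mul_pow, show ((2:ℝ)^k)^(3:ℕ) = (8:ℝ)^k by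
            rw [pow_right_comm]; norm_num, div_pow]
          field_simp
      _ ≤ ENNReal.ofReal (((2:ℝ)^p * A^p * C₂ * (t^2/A^3)) * (1 - (2:ℝ)^p/8)⁻¹) :=
          geom_sum_le _ _ (by positivity) (by positivity) (by linarith)
      _ ≤ _ := by
          refine ENNReal.ofReal_le_ofReal ?_
          have h1' : (2:ℝ)^p * A^p * C₂ * (t^2/A^3) ≤ 8 * (A^p * C₂) := by
            calc (2:ℝ)^p * A^p * C₂ * (t^2/A^3)
                ≤ 8 * A^p * C₂ * (t^2/A^3) := by
                  apply mul_le_mul_of_nonneg_right _ (by positivity)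
                  exact mul_le_mul_of_nonneg_right
                    (mul_le_mul_of_nonneg_right h2p hApnn) h2.le
              _ ≤ 8 * A^p * C₂ * 1 :=
                  mul_le_mul_of_nonneg_left htA3 (by positivity)
              _ = 8 * (A^p * C₂) := by ring
          calc ((2:ℝ)^p * A^p * C₂ * (t^2/A^3)) * (1 - (2:ℝ)^p/8)⁻¹
              ≤ (8 * (A^p * C₂)) * (1 - (2:ℝ)^p/8)⁻¹ :=
                mul_le_mul_of_nonneg_right h1' hinv8
            _ = 8 * (1 - (2:ℝ)^p/8)⁻¹ * C₂ * A ^ p := by ring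
  have hS3 : ∑' k : ℕ, ENNReal.ofReal (((2:ℝ)^(k+1) * A) ^ p) *
      ENNReal.ofReal (C₃ * (t ^ 3 / ((2:ℝ)^k * A) ^ 5)) ≤
      ENNReal.ofReal (16 * C₃ * A ^ p) := by
    calc ∑' k : ℕ, ENNReal.ofReal (((2:ℝ)^(k+1) * A) ^ p) *
          ENNReal.ofReal (C₃ * (t ^ 3 / ((2:ℝ)^k * A) ^ 5))
        = ∑' k : ℕ, ENNReal.ofReal
            (((2:ℝ)^p * A^p * C₃ * (t^3/A^5)) * ((2:ℝ)^p/32)^k) := by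
          refine tsum_congr fun k => ?_
          rw [← ENNReal.ofReal_mul (hFnn k)]
          congr 1
          rw [key1 k, mul_pow, show ((2:ℝ)^k)^(5:ℕ) = (32:ℝ)^k by
            rw [pow_right_comm]; norm_num, div_pow]
          field_simp
      _ ≤ ENNReal.ofReal (((2:ℝ)^p * A^p * C₃ * (t^3/A^5)) * (1 - (2:ℝ)^p/32)⁻¹) :=
          geom_sum_le _ _ (by positivity) (by positivity) (by linarith)
      _ ≤ _ := by
          refine ENNReal.ofReal_le_ofReal ?_
          have h := hmain (A^p * C₃ * (t^3/A^5)) ((2:ℝ)^p/32)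
            (by positivity) (by positivity) (by linarith)
          calc ((2:ℝ)^p * A^p * C₃ * (t^3/A^5)) * (1 - (2:ℝ)^p/32)⁻¹
              = ((2:ℝ)^p * (A^p * C₃ * (t^3/A^5))) * (1 - (2:ℝ)^p/32)⁻¹ := by ring
            _ ≤ 16 * (A^p * C₃ * (t^3/A^5)) := h
            _ ≤ 16 * (A^p * C₃ * 1) := by
                apply mul_le_mul_of_nonneg_left _ (by norm_num)
                exact mul_le_mul_of_nonneg_left ht3A5 (by positivity)
            _ = 16 * C₃ * A ^ p := by ring
  have hS4 : ∑' k : ℕ, ENNReal.ofReal (((2:ℝ)^(k+1) * A) ^ p) *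
      ENNReal.ofReal (C₄ * Real.exp (-C₅ * ((2:ℝ)^k * A) ^ 3 / t ^ 2)) ≤
      ENNReal.ofReal (16 * C₄ * A ^ p) := by
    have harg : ∀ k : ℕ, -C₅ * ((2:ℝ)^k * A) ^ 3 / t ^ 2 = -(C₅ * r^3 * (8:ℝ)^k) := by
      intro k
      rw [mul_pow, show ((2:ℝ)^k)^(3:ℕ) = (8:ℝ)^k by rw [pow_right_comm]; norm_num, hA3]
      field_simp
    have hexpk : ∀ k : ℕ, Real.exp (-(C₅ * r^3 * (8:ℝ)^k)) ≤
        Real.exp (-4:ℝ) * (Real.exp (-4:ℝ))^k := by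
      intro k
      rw [← pow_succ']
      rw [show (Real.exp (-4:ℝ))^(k+1) = Real.exp ((((k+1):ℕ):ℝ) * (-4)) from
        (Real.exp_nat_mul _ _).symm]
      apply Real.exp_le_exp.mpr
      push_cast
      have h8k0 : (0:ℝ) ≤ (8:ℝ)^k := by positivity
      have h1 := mul_le_mul_of_nonneg_right hrC h8k0
      have h2' := hbern8 k
      nlinarith
    calc ∑' k : ℕ, ENNReal.ofReal (((2:ℝ)^(k+1) * A) ^ p) *
          ENNReal.ofReal (C₄ * Real.exp (-C₅ * ((2:ℝ)^k * A) ^ 3 / t ^ 2))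
        ≤ ∑' k : ℕ, ENNReal.ofReal
            ((8 * A^p * C₄ * Real.exp (-4:ℝ)) * (8 * Real.exp (-4:ℝ))^k) := by
          refine Summable.tsum_le_tsum (fun k => ?_) ENNReal.summable ENNReal.summable
          rw [← ENNReal.ofReal_mul (hFnn k)]
          refine ENNReal.ofReal_le_ofReal ?_
          rw [key1 k, harg k]
          calc ((2:ℝ)^p * ((2:ℝ)^p)^k) * A^p * (C₄ * Real.exp (-(C₅ * r^3 * (8:ℝ)^k)))
              ≤ (8 * (8:ℝ)^k) * A^p * (C₄ * (Real.exp (-4:ℝ) * (Real.exp (-4:ℝ))^k)) := by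
                apply mul_le_mul
                · exact mul_le_mul_of_nonneg_right
                    (mul_le_mul h2p (pow_le_pow_left₀ h2p0.le h2p k) (by positivity)
                      (by norm_num)) hApnn
                · exact mul_le_mul_of_nonneg_left (hexpk k) h4.le
                · positivity
                · positivity
            _ = (8 * A^p * C₄ * Real.exp (-4:ℝ)) * (8 * Real.exp (-4:ℝ))^k := by
                rw [mul_pow]; ring
      _ ≤ ENNReal.ofReal ((8 * A^p * C₄ * Real.exp (-4:ℝ)) * (1 - 8 * Real.exp (-4:ℝ))⁻¹) :=
          geom_sum_le _ _ (by positivity) (by positivity) (by nlinarith [hexp4])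
      _ ≤ _ := by
          refine ENNReal.ofReal_le_ofReal ?_
          have hq : 8 * Real.exp (-4:ℝ) ≤ 1/2 := by linarith
          have hinv : (1 - 8 * Real.exp (-4:ℝ))⁻¹ ≤ 2 := hq_inv2 _ hq
          have hinv0 : (0:ℝ) ≤ (1 - 8 * Real.exp (-4:ℝ))⁻¹ := inv_nonneg.2 (by linarith)
          have he1 : Real.exp (-4:ℝ) ≤ 1 := by linarith
          calc (8 * A^p * C₄ * Real.exp (-4:ℝ)) * (1 - 8 * Real.exp (-4:ℝ))⁻¹
              ≤ (8 * A^p * C₄ * 1) * (1 - 8 * Real.exp (-4:ℝ))⁻¹ :=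
                mul_le_mul_of_nonneg_right
                  (mul_le_mul_of_nonneg_left he1 (by positivity)) hinv0
            _ ≤ (8 * A^p * C₄ * 1) * 2 := mul_le_mul_of_nonneg_left hinv (by positivity)
            _ = 16 * C₄ * A ^ p := by ring
  have hS5 : ∑' k : ℕ, ENNReal.ofReal (((2:ℝ)^(k+1) * A) ^ p) *
      ENNReal.ofReal (Real.exp (-((2:ℝ)^k * A) / 2)) ≤
      ENNReal.ofReal (16 * A ^ p) := by
    have hexpA : Real.exp (-(A/2)) ≤ 1/16 := by
      have h := Real.exp_le_exp.mpr (show -(A/2) ≤ (-4:ℝ) by linarith)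
      linarith [hexp4]
    have hexpk : ∀ k : ℕ, Real.exp (-((2:ℝ)^k * A) / 2) ≤
        Real.exp (-(A/2)) * (Real.exp (-(A/2)))^k := by
      intro k
      rw [← pow_succ']
      rw [show (Real.exp (-(A/2)))^(k+1) = Real.exp ((((k+1):ℕ):ℝ) * (-(A/2))) from
        (Real.exp_nat_mul _ _).symm]
      apply Real.exp_le_exp.mpr
      push_cast
      have hb := hbern k
      nlinarith [hA0.le]
    calc ∑' k : ℕ, ENNReal.ofReal (((2:ℝ)^(k+1) * A) ^ p) *
          ENNReal.ofReal (Real.exp (-((2:ℝ)^k * A) / 2))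
        ≤ ∑' k : ℕ, ENNReal.ofReal
            ((8 * A^p * Real.exp (-(A/2))) * (8 * Real.exp (-(A/2)))^k) := by
          refine Summable.tsum_le_tsum (fun k => ?_) ENNReal.summable ENNReal.summable
          rw [← ENNReal.ofReal_mul (hFnn k)]
          refine ENNReal.ofReal_le_ofReal ?_
          rw [key1 k]
          calc ((2:ℝ)^p * ((2:ℝ)^p)^k) * A^p * Real.exp (-((2:ℝ)^k * A) / 2)
              ≤ (8 * (8:ℝ)^k) * A^p * (Real.exp (-(A/2)) * (Real.exp (-(A/2)))^k) := by
                apply mul_le_mul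
                · exact mul_le_mul_of_nonneg_right
                    (mul_le_mul h2p (pow_le_pow_left₀ h2p0.le h2p k) (by positivity)
                      (by norm_num)) hApnn
                · exact hexpk k
                · positivity
                · positivity
            _ = (8 * A^p * Real.exp (-(A/2))) * (8 * Real.exp (-(A/2)))^k := by
                rw [mul_pow]; ring
      _ ≤ ENNReal.ofReal ((8 * A^p * Real.exp (-(A/2))) * (1 - 8 * Real.exp (-(A/2)))⁻¹) :=
          geom_sum_le _ _ (by positivity) (by positivity) (by nlinarith [hexpA])
      _ ≤ _ := by
          refine ENNReal.ofReal_le_ofReal ?_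
          have hq : 8 * Real.exp (-(A/2)) ≤ 1/2 := by linarith
          have hinv : (1 - 8 * Real.exp (-(A/2)))⁻¹ ≤ 2 := hq_inv2 _ hq
          have hinv0 : (0:ℝ) ≤ (1 - 8 * Real.exp (-(A/2)))⁻¹ := inv_nonneg.2 (by linarith)
          have he1 : Real.exp (-(A/2)) ≤ 1 := by linarith
          calc (8 * A^p * Real.exp (-(A/2))) * (1 - 8 * Real.exp (-(A/2)))⁻¹
              ≤ (8 * A^p * 1) * (1 - 8 * Real.exp (-(A/2)))⁻¹ :=
                mul_le_mul_of_nonneg_right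
                  (mul_le_mul_of_nonneg_left he1 (by positivity)) hinv0
            _ ≤ (8 * A^p * 1) * 2 := mul_le_mul_of_nonneg_left hinv (by positivity)
            _ = 16 * A ^ p := by ring
  -- assembly
  have hu1 : ∀ k : ℕ, (1:ℝ) ≤ (2:ℝ)^k * A := by
    intro k
    calc (1:ℝ) ≤ A := hA1
    _ = 1 * A := (one_mul A).symm
    _ ≤ (2:ℝ)^k * A := mul_le_mul_of_nonneg_right (one_le_pow₀ one_le_two) hA0.le
  have hPk : ∀ k : ℕ, P {ω | (2:ℝ)^k * A ≤ |X ω|} ≤ ENNReal.ofReal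
      (C₁ * (t ^ 2 / ((2:ℝ)^k * A) ^ 4) * Ψ + C₂ * (t ^ 2 / ((2:ℝ)^k * A) ^ 3) +
        C₃ * (t ^ 3 / ((2:ℝ)^k * A) ^ 5) + C₄ * Real.exp (-C₅ * ((2:ℝ)^k * A) ^ 3 / t ^ 2) +
        Real.exp (-((2:ℝ)^k * A) / 2)) := by
    intro k
    calc P {ω | (2:ℝ)^k * A ≤ |X ω|}
        = ENNReal.ofReal ((P {ω | (2:ℝ)^k * A ≤ |X ω|}).toReal) :=
          (ENNReal.ofReal_toReal (measure_ne_top P _)).symm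
      _ ≤ _ := ENNReal.ofReal_le_ofReal (htail _ (hu1 k))
  have split5 : ∀ a b c d e : ℝ, ENNReal.ofReal (a+b+c+d+e) ≤
      ENNReal.ofReal a + ENNReal.ofReal b + ENNReal.ofReal c + ENNReal.ofReal d +
        ENNReal.ofReal e := by
    intro a b c d e
    calc ENNReal.ofReal (a+b+c+d+e)
        ≤ ENNReal.ofReal (a+b+c+d) + ENNReal.ofReal e := ENNReal.ofReal_add_le
      _ ≤ (ENNReal.ofReal (a+b+c) + ENNReal.ofReal d) + ENNReal.ofReal e :=
          add_le_add ENNReal.ofReal_add_le le_rfl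
      _ ≤ ((ENNReal.ofReal (a+b) + ENNReal.ofReal c) + ENNReal.ofReal d) +
            ENNReal.ofReal e :=
          add_le_add (add_le_add ENNReal.ofReal_add_le le_rfl) le_rfl
      _ ≤ (((ENNReal.ofReal a + ENNReal.ofReal b) + ENNReal.ofReal c) +
            ENNReal.ofReal d) + ENNReal.ofReal e :=
          add_le_add (add_le_add (add_le_add ENNReal.ofReal_add_le le_rfl) le_rfl) le_rfl
  have hsum : ∑' k : ℕ, ENNReal.ofReal (((2:ℝ)^(k+1) * A) ^ p) *
      P {ω | (2:ℝ)^k * A ≤ |X ω|} ≤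
      ENNReal.ofReal (16 * C₁ * (t^2/A^4) * Ψ * A^p) +
        ENNReal.ofReal (8 * (1 - (2:ℝ)^p/8)⁻¹ * C₂ * A^p) +
        ENNReal.ofReal (16 * C₃ * A^p) + ENNReal.ofReal (16 * C₄ * A^p) +
        ENNReal.ofReal (16 * A^p) := by
    calc ∑' k : ℕ, ENNReal.ofReal (((2:ℝ)^(k+1) * A) ^ p) * P {ω | (2:ℝ)^k * A ≤ |X ω|}
        ≤ ∑' k : ℕ,
            (ENNReal.ofReal (((2:ℝ)^(k+1) * A) ^ p) *
              ENNReal.ofReal (C₁ * (t ^ 2 / ((2:ℝ)^k * A) ^ 4) * Ψ) +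
            ENNReal.ofReal (((2:ℝ)^(k+1) * A) ^ p) *
              ENNReal.ofReal (C₂ * (t ^ 2 / ((2:ℝ)^k * A) ^ 3)) +
            ENNReal.ofReal (((2:ℝ)^(k+1) * A) ^ p) *
              ENNReal.ofReal (C₃ * (t ^ 3 / ((2:ℝ)^k * A) ^ 5)) +
            ENNReal.ofReal (((2:ℝ)^(k+1) * A) ^ p) *
              ENNReal.ofReal (C₄ * Real.exp (-C₅ * ((2:ℝ)^k * A) ^ 3 / t ^ 2)) +
            ENNReal.ofReal (((2:ℝ)^(k+1) * A) ^ p) *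
              ENNReal.ofReal (Real.exp (-((2:ℝ)^k * A) / 2))) := by
          refine Summable.tsum_le_tsum (fun k => ?_) ENNReal.summable ENNReal.summable
          calc ENNReal.ofReal (((2:ℝ)^(k+1) * A) ^ p) * P {ω | (2:ℝ)^k * A ≤ |X ω|}
              ≤ ENNReal.ofReal (((2:ℝ)^(k+1) * A) ^ p) *
                (ENNReal.ofReal (C₁ * (t ^ 2 / ((2:ℝ)^k * A) ^ 4) * Ψ) +
                  ENNReal.ofReal (C₂ * (t ^ 2 / ((2:ℝ)^k * A) ^ 3)) +
                  ENNReal.ofReal (C₃ * (t ^ 3 / ((2:ℝ)^k * A) ^ 5)) +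
                  ENNReal.ofReal (C₄ * Real.exp (-C₅ * ((2:ℝ)^k * A) ^ 3 / t ^ 2)) +
                  ENNReal.ofReal (Real.exp (-((2:ℝ)^k * A) / 2))) :=
                mul_le_mul' le_rfl ((hPk k).trans (split5 _ _ _ _ _))
            _ = _ := by rw [mul_add, mul_add, mul_add, mul_add]
      _ = (∑' k : ℕ, ENNReal.ofReal (((2:ℝ)^(k+1) * A) ^ p) *
              ENNReal.ofReal (C₁ * (t ^ 2 / ((2:ℝ)^k * A) ^ 4) * Ψ)) +
          (∑' k : ℕ, ENNReal.ofReal (((2:ℝ)^(k+1) * A) ^ p) *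
              ENNReal.ofReal (C₂ * (t ^ 2 / ((2:ℝ)^k * A) ^ 3))) +
          (∑' k : ℕ, ENNReal.ofReal (((2:ℝ)^(k+1) * A) ^ p) *
              ENNReal.ofReal (C₃ * (t ^ 3 / ((2:ℝ)^k * A) ^ 5))) +
          (∑' k : ℕ, ENNReal.ofReal (((2:ℝ)^(k+1) * A) ^ p) *
              ENNReal.ofReal (C₄ * Real.exp (-C₅ * ((2:ℝ)^k * A) ^ 3 / t ^ 2))) +
          (∑' k : ℕ, ENNReal.ofReal (((2:ℝ)^(k+1) * A) ^ p) *
              ENNReal.ofReal (Real.exp (-((2:ℝ)^k * A) / 2))) := by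
          simp only [ENNReal.tsum_add]
      _ ≤ _ := add_le_add (add_le_add (add_le_add (add_le_add hS1 hS2) hS3) hS4) hS5
  refine (lemA Ω P X hX p A (by linarith) hA1).trans ?_
  have hb1 : (0:ℝ) ≤ 16 * C₁ * (t^2/A^4) * Ψ * A^p := by positivity
  have hb2 : (0:ℝ) ≤ 8 * (1 - (2:ℝ)^p/8)⁻¹ * C₂ * A^p :=
    mul_nonneg (mul_nonneg (mul_nonneg (by norm_num) hinv8) h2.le) hApnn
  have hb3 : (0:ℝ) ≤ 16 * C₃ * A^p := by positivity
  have hb4 : (0:ℝ) ≤ 16 * C₄ * A^p := by positivity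
  have hb5 : (0:ℝ) ≤ 16 * A^p := by positivity
  calc ENNReal.ofReal (A ^ p) + ∑' k : ℕ, ENNReal.ofReal (((2:ℝ)^(k+1) * A) ^ p) *
        P {ω | (2:ℝ)^k * A ≤ |X ω|}
      ≤ ENNReal.ofReal (A ^ p) +
        (ENNReal.ofReal (16 * C₁ * (t^2/A^4) * Ψ * A^p) +
          ENNReal.ofReal (8 * (1 - (2:ℝ)^p/8)⁻¹ * C₂ * A^p) +
          ENNReal.ofReal (16 * C₃ * A^p) + ENNReal.ofReal (16 * C₄ * A^p) +
          ENNReal.ofReal (16 * A^p)) := add_le_add le_rfl hsum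
    _ = ENNReal.ofReal (A ^ p +
        (16 * C₁ * (t^2/A^4) * Ψ * A^p + 8 * (1 - (2:ℝ)^p/8)⁻¹ * C₂ * A^p +
          16 * C₃ * A^p + 16 * C₄ * A^p + 16 * A^p)) := by
        rw [← ENNReal.ofReal_add hb1 hb2,
          ← ENNReal.ofReal_add (add_nonneg hb1 hb2) hb3,
          ← ENNReal.ofReal_add (add_nonneg (add_nonneg hb1 hb2) hb3) hb4,
          ← ENNReal.ofReal_add (add_nonneg (add_nonneg (add_nonneg hb1 hb2) hb3) hb4) hb5,
          ← ENNReal.ofReal_add hApnn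
            (add_nonneg (add_nonneg (add_nonneg (add_nonneg hb1 hb2) hb3) hb4) hb5)]
    _ = ENNReal.ofReal (A ^ p *
        (1 + 16 * C₁ * (t ^ 2 / A ^ 4) * Ψ + 8 * (1 - (2:ℝ) ^ p / 8)⁻¹ * C₂ +
          16 * C₃ + 16 * C₄ + 16)) := by ring_nf


/-- Deduction of the upper bound of Theorem 2.2 from the tail estimate of Lemma 3.8. -/
theorem stmt11 (C₁ C₂ C₃ C₄ C₅ : ℝ) (h1 : 0 < C₁) (h2 : 0 < C₂) (h3 : 0 < C₃)
    (h4 : 0 < C₄) (h5 : 0 < C₅) (m : ℝ) (hm1 : 1 ≤ m) (hm3 : m < 3) :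
    ∃ t₀ C : ℝ, 0 < t₀ ∧ 0 < C ∧
      ∀ t : ℝ, t₀ ≤ t →
      ∀ (Ω : Type) (_ : MeasurableSpace Ω) (P : Measure Ω), IsProbabilityMeasure P →
      ∀ X : Ω → ℝ, Measurable X → Integrable X P →
        (∀ u : ℝ, 1 ≤ u →
          (P {ω | u ≤ |X ω|}).toReal ≤
            C₁ * (t ^ 2 / u ^ 4) * (∫ ω, |X ω| ∂P) + C₂ * (t ^ 2 / u ^ 3) +
              C₃ * (t ^ 3 / u ^ 5) + C₄ * Real.exp (-C₅ * u ^ 3 / t ^ 2) +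
              Real.exp (-u / 2)) →
        ∫⁻ ω, ENNReal.ofReal (|X ω| ^ m) ∂P ≤ ENNReal.ofReal (C * t ^ (2 * m / 3)) := by
  set r : ℝ := 8 + 32 * C₁ + 4 / C₅ with hrdef
  clear_value r
  have hdiv : (0:ℝ) < 4 / C₅ := by positivity
  have hr8 : (8:ℝ) ≤ r := by rw [hrdef]; linarith
  have hr1 : (1:ℝ) ≤ r := by linarith
  have hr0 : (0:ℝ) < r := by linarith
  have hsq : (1:ℝ) ≤ r ^ 2 := by nlinarith [hr1]
  have hrr3 : r ≤ r ^ 3 := by nlinarith [mul_le_mul_of_nonneg_left hsq hr0.le]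
  have hr32 : 32 * C₁ ≤ r ^ 3 := by
    have : 32 * C₁ ≤ r := by rw [hrdef]; linarith
    linarith
  have hrC : 4 ≤ C₅ * r ^ 3 := by
    have h' : 4 / C₅ ≤ r ^ 3 := by
      have : 4 / C₅ ≤ r := by rw [hrdef]; linarith
      linarith
    have := mul_le_mul_of_nonneg_left h' h5.le
    rw [mul_div_cancel₀ _ (ne_of_gt h5)] at this
    exact this
  have h2m8 : (2:ℝ) ^ m < 8 := by
    have h := Real.rpow_lt_rpow_of_exponent_lt (x := 2) one_lt_two hm3
    rwa [show ((3:ℝ)) = ((3:ℕ):ℝ) by norm_num, Real.rpow_natCast,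
      show ((2:ℝ)^(3:ℕ)) = 8 by norm_num] at h
  have hEm0 : (0:ℝ) ≤ (1 - (2:ℝ) ^ m / 8)⁻¹ := inv_nonneg.2 (by linarith)
  set D : ℝ := 17 + (32/3) * C₂ + 16 * C₃ + 16 * C₄ with hDdef
  clear_value D
  have hD0 : (0:ℝ) < D := by rw [hDdef]; linarith
  have hC0 : 0 < r ^ 3 * (33 + 32 * C₁ * D * r + 8 * (1 - (2:ℝ) ^ m / 8)⁻¹ * C₂
      + 16 * C₃ + 16 * C₄) := by
    apply mul_pos (by positivity)
    have ht1 : (0:ℝ) ≤ 32 * C₁ * D * r := by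
      apply mul_nonneg (mul_nonneg (by linarith) hD0.le) hr0.le
    have ht2 : (0:ℝ) ≤ 8 * (1 - (2:ℝ) ^ m / 8)⁻¹ * C₂ :=
      mul_nonneg (mul_nonneg (by norm_num) hEm0) h2.le
    linarith
  refine ⟨1, r ^ 3 * (33 + 32 * C₁ * D * r + 8 * (1 - (2:ℝ) ^ m / 8)⁻¹ * C₂
      + 16 * C₃ + 16 * C₄), one_pos, hC0, ?_⟩
  intro t ht Ω mΩ P hP X hXm hXint htail
  have ht0 : (0:ℝ) < t := lt_of_lt_of_le one_pos ht
  set Ψ := ∫ ω, |X ω| ∂P with hΨdef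
  clear_value Ψ
  have hΨ0 : (0:ℝ) ≤ Ψ := by
    rw [hΨdef]; exact integral_nonneg fun _ => abs_nonneg _
  set A := r * t ^ ((2:ℝ)/3) with hAdef
  clear_value A
  rw [hΨdef] at htail
  have hτ1 : (1:ℝ) ≤ t ^ ((2:ℝ)/3) := by
    calc (1:ℝ) = (1:ℝ) ^ ((2:ℝ)/3) := (Real.one_rpow _).symm
    _ ≤ t ^ ((2:ℝ)/3) := Real.rpow_le_rpow (by norm_num) ht (by norm_num)
  have hA1 : (1:ℝ) ≤ A := by
    calc (1:ℝ) ≤ r := hr1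
    _ = r * 1 := (mul_one r).symm
    _ ≤ r * t ^ ((2:ℝ)/3) := mul_le_mul_of_nonneg_left hτ1 hr0.le
    _ = A := hAdef.symm
  have hA0 : (0:ℝ) < A := by linarith
  have hτ3 : (t ^ ((2:ℝ)/3)) ^ (3:ℕ) = t ^ (2:ℕ) := by
    rw [← Real.rpow_natCast (t ^ ((2:ℝ)/3)) 3, ← Real.rpow_mul ht0.le,
      ← Real.rpow_natCast t 2]
    norm_num
  have hA3 : A ^ 3 = r ^ 3 * t ^ 2 := by rw [hAdef, mul_pow, hτ3]
  have hAt : t ^ 2 * A / A ^ 4 = 1 / r ^ 3 := by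
    have h4' : A ^ 4 = A ^ 3 * A := by ring
    rw [h4', hA3]
    field_simp
  -- bootstrap step with p = 1
  have hB1 := lemB C₁ C₂ C₃ C₄ C₅ h1 h2 h3 h4 h5 1 r t le_rfl (by norm_num)
    hr8 hrC ht Ω P X hXm htail
  simp only [Real.rpow_one] at hB1
  rw [← hAdef, ← hΨdef] at hB1
  have hL : ENNReal.ofReal Ψ = ∫⁻ ω, ENNReal.ofReal (|X ω|) ∂P := by
    rw [hΨdef]
    exact ofReal_integral_eq_lintegral_ofReal hXint.abs
      (Filter.Eventually.of_forall fun ω => abs_nonneg _)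
  rw [← hL] at hB1
  have hRnn : (0:ℝ) ≤ A * (1 + 16 * C₁ * (t ^ 2 / A ^ 4) * Ψ
      + 8 * (1 - (2:ℝ)/8)⁻¹ * C₂ + 16 * C₃ + 16 * C₄ + 16) := by
    apply mul_nonneg hA0.le
    have hx1 : (0:ℝ) ≤ 16 * C₁ * (t ^ 2 / A ^ 4) * Ψ := by positivity
    have hx2 : (0:ℝ) ≤ 8 * (1 - (2:ℝ)/8)⁻¹ * C₂ := by positivity
    linarith
  have hΨle : Ψ ≤ A * (1 + 16 * C₁ * (t ^ 2 / A ^ 4) * Ψ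
      + 8 * (1 - (2:ℝ)/8)⁻¹ * C₂ + 16 * C₃ + 16 * C₄ + 16) :=
    (ENNReal.ofReal_le_ofReal_iff hRnn).1 hB1
  have hterm : A * (16 * C₁ * (t ^ 2 / A ^ 4) * Ψ) = 16 * C₁ / r ^ 3 * Ψ := by
    calc A * (16 * C₁ * (t ^ 2 / A ^ 4) * Ψ) = 16 * C₁ * (t ^ 2 * A / A ^ 4) * Ψ := by
          ring
    _ = 16 * C₁ * (1 / r ^ 3) * Ψ := by rw [hAt]
    _ = 16 * C₁ / r ^ 3 * Ψ := by ring
  have hΨle2 : Ψ ≤ 16 * C₁ / r ^ 3 * Ψ + D * A := by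
    have hexp : A * (1 + 16 * C₁ * (t ^ 2 / A ^ 4) * Ψ
        + 8 * (1 - (2:ℝ)/8)⁻¹ * C₂ + 16 * C₃ + 16 * C₄ + 16)
        = 16 * C₁ / r ^ 3 * Ψ + (17 + 8 * (1 - (2:ℝ)/8)⁻¹ * C₂ + 16 * C₃ + 16 * C₄) * A := by
      linear_combination hterm
    rw [hexp] at hΨle
    have : 17 + 8 * (1 - (2:ℝ)/8)⁻¹ * C₂ + 16 * C₃ + 16 * C₄ = D := by
      rw [hDdef]; norm_num
    rwa [this] at hΨle
  have hhalf : 16 * C₁ / r ^ 3 ≤ 1/2 := by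
    rw [div_le_iff₀ (by positivity)]
    linarith
  have hΨ2 : Ψ ≤ 2 * D * A := by
    have := mul_le_mul_of_nonneg_right hhalf hΨ0
    have hDA : 0 ≤ D * A := mul_nonneg hD0.le hA0.le
    linarith
  -- main step with p = m
  have hBm := lemB C₁ C₂ C₃ C₄ C₅ h1 h2 h3 h4 h5 m r t hm1 hm3
    hr8 hrC ht Ω P X hXm htail
  rw [← hAdef, ← hΨdef] at hBm
  refine hBm.trans (ENNReal.ofReal_le_ofReal ?_)
  -- real inequality
  have hAm : A ^ m = r ^ m * t ^ (2 * m / 3) := by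
    rw [hAdef, Real.mul_rpow hr0.le (Real.rpow_nonneg ht0.le _),
      ← Real.rpow_mul ht0.le]
    congr 1
    ring
  have hrm : r ^ m ≤ r ^ 3 := by
    calc r ^ m ≤ r ^ (3:ℝ) := Real.rpow_le_rpow_of_exponent_le hr1 hm3.le
    _ = r ^ (3:ℕ) := Real.rpow_natCast r 3
  have htm0 : (0:ℝ) ≤ t ^ (2 * m / 3) := Real.rpow_nonneg ht0.le _
  have hAmle : A ^ m ≤ r ^ 3 * t ^ (2 * m / 3) := by
    rw [hAm]
    exact mul_le_mul_of_nonneg_right hrm htm0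
  have hterm2 : 16 * C₁ * (t ^ 2 / A ^ 4) * Ψ ≤ 32 * C₁ * D * r + 16 := by
    have hc : (0:ℝ) ≤ 16 * C₁ * (t ^ 2 / A ^ 4) :=
      mul_nonneg (mul_nonneg (by norm_num) h1.le) (by positivity)
    have hstep : 16 * C₁ * (t ^ 2 / A ^ 4) * Ψ ≤ 16 * C₁ * (t ^ 2 / A ^ 4) * (2 * D * A) :=
      mul_le_mul_of_nonneg_left hΨ2 hc
    have heq : 16 * C₁ * (t ^ 2 / A ^ 4) * (2 * D * A) = 32 * C₁ * D * (t ^ 2 * A / A ^ 4) := by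
      ring
    rw [heq, hAt] at hstep
    have h1r3 : 1 / r ^ 3 ≤ 1 := by
      rw [div_le_one (by positivity)]
      linarith
    have hfin : 32 * C₁ * D * (1 / r ^ 3) ≤ 32 * C₁ * D * r := by
      have h0 : (0:ℝ) ≤ 32 * C₁ * D := by positivity
      have : (1:ℝ) / r ^ 3 ≤ r := le_trans h1r3 hr1
      exact mul_le_mul_of_nonneg_left this h0
    linarith
  have hparen0 : (0:ℝ) ≤ 1 + 16 * C₁ * (t ^ 2 / A ^ 4) * Ψ
      + 8 * (1 - (2:ℝ) ^ m / 8)⁻¹ * C₂ + 16 * C₃ + 16 * C₄ + 16 := by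
    have hx1 : (0:ℝ) ≤ 16 * C₁ * (t ^ 2 / A ^ 4) * Ψ := by positivity
    have hx2 : (0:ℝ) ≤ 8 * (1 - (2:ℝ) ^ m / 8)⁻¹ * C₂ :=
      mul_nonneg (mul_nonneg (by norm_num) hEm0) h2.le
    linarith
  have hparen : 1 + 16 * C₁ * (t ^ 2 / A ^ 4) * Ψ
      + 8 * (1 - (2:ℝ) ^ m / 8)⁻¹ * C₂ + 16 * C₃ + 16 * C₄ + 16
      ≤ 33 + 32 * C₁ * D * r + 8 * (1 - (2:ℝ) ^ m / 8)⁻¹ * C₂ + 16 * C₃ + 16 * C₄ := by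
    linarith
  calc A ^ m * (1 + 16 * C₁ * (t ^ 2 / A ^ 4) * Ψ
      + 8 * (1 - (2:ℝ) ^ m / 8)⁻¹ * C₂ + 16 * C₃ + 16 * C₄ + 16)
      ≤ (r ^ 3 * t ^ (2 * m / 3)) * (33 + 32 * C₁ * D * r
        + 8 * (1 - (2:ℝ) ^ m / 8)⁻¹ * C₂ + 16 * C₃ + 16 * C₄) := by
        apply mul_le_mul hAmle hparen hparen0 (by positivity)
    _ = r ^ 3 * (33 + 32 * C₁ * D * r + 8 * (1 - (2:ℝ) ^ m / 8)⁻¹ * C₂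
        + 16 * C₃ + 16 * C₄) * t ^ (2 * m / 3) := by ring
end
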